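/- Let φ: A → A' be a bijective unital multiplicative *-Lie-Jordan n-map between unital C*-algebras, and P₁ a nontrivial projection with P₂ = I - P₁. Then for A_{12} ∈ P₁AP₂ and B_{21} ∈ P₂AP₁, φ(A_{12} + B_{21}) = φ(A_{12}) + φ(B_{21}). -/
import Mathlib

def lieStar {R : Type*} [NonUnitalRing R] [StarRing R] (x y : R) : R := x * y - y * star x
def jordanStar {R : Type*} [NonUnitalRing R] [StarRing R] (x y : R) : R := x * y + y * star x
def pStar {R : Type*} [NonUnitalRing R] [StarRing R] (x : R) (l : List R) : R := l.foldl lieStar x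
def qStar {R : Type*} [NonUnitalRing R] [StarRing R] (x : R) (l : List R) : R := l.foldl jordanStar x

section Aux
variable {R : Type*} [Ring R] [StarRing R]

lemma pStar_cons (x c : R) (l : List R) : pStar x (c :: l) = pStar (lieStar x c) l := rfl
lemma qStar_cons (x c : R) (l : List R) : qStar x (c :: l) = qStar (jordanStar x c) l := rfl

lemma star_nsmul' (m : ℕ) (y : R) : star (m • y) = m • star y := by
  induction m with
  | zero => simp
  | succ m ih => rw [succ_nsmul, succ_nsmul, star_add, ih]

lemma mul_nsmul_right (m : ℕ) (x y : R) : x * (m • y) = m • (x * y) := by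
  induction m with
  | zero => simp
  | succ m ih => rw [succ_nsmul, succ_nsmul, mul_add, ih]

lemma nsmul_mul_left (m : ℕ) (x y : R) : (m • x) * y = m • (x * y) := by
  induction m with
  | zero => simp
  | succ m ih => rw [succ_nsmul, succ_nsmul, add_mul, ih]

lemma lieStar_add_left (x y c : R) : lieStar (x + y) c = lieStar x c + lieStar y c := by
  simp only [lieStar, star_add]; noncomm_ring

lemma jordanStar_add_left (x y c : R) : jordanStar (x + y) c = jordanStar x c + jordanStar y c := by
  simp only [jordanStar, star_add]; noncomm_ring

lemma lieStar_sub_left (x y c : R) : lieStar (x - y) c = lieStar x c - lieStar y c := by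
  simp only [lieStar, star_sub]; noncomm_ring

lemma jordanStar_sub_left (x y c : R) : jordanStar (x - y) c = jordanStar x c - jordanStar y c := by
  simp only [jordanStar, star_sub]; noncomm_ring

lemma lieStar_nsmul_left (m : ℕ) (y c : R) : lieStar (m • y) c = m • lieStar y c := by
  rw [lieStar, lieStar, star_nsmul', nsmul_mul_left, mul_nsmul_right, smul_sub]

lemma jordanStar_nsmul_left (m : ℕ) (y c : R) : jordanStar (m • y) c = m • jordanStar y c := by
  rw [jordanStar, jordanStar, star_nsmul', nsmul_mul_left, mul_nsmul_right, smul_add]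

lemma pStar_add_left (l : List R) : ∀ x y : R, pStar (x + y) l = pStar x l + pStar y l := by
  induction l with
  | nil => intro x y; rfl
  | cons c l ih => intro x y; rw [pStar_cons, lieStar_add_left, ih, pStar_cons, pStar_cons]

lemma qStar_add_left (l : List R) : ∀ x y : R, qStar (x + y) l = qStar x l + qStar y l := by
  induction l with
  | nil => intro x y; rfl
  | cons c l ih => intro x y; rw [qStar_cons, jordanStar_add_left, ih, qStar_cons, qStar_cons]

lemma pStar_zero (l : List R) : pStar (0 : R) l = 0 := by
  induction l with
  | nil => rfl
  | cons c l ih => rw [pStar_cons, show lieStar (0:R) c = 0 by simp [lieStar]]; exact ih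

lemma qStar_zero (l : List R) : qStar (0 : R) l = 0 := by
  induction l with
  | nil => rfl
  | cons c l ih => rw [qStar_cons, show jordanStar (0:R) c = 0 by simp [jordanStar]]; exact ih


lemma pStar_replicate (e : R) (he : e * e = e) (hes : star e = e) :
    ∀ k : ℕ, 1 ≤ k → ∀ x : R,
      pStar x (List.replicate k e)
        = ((x * e - e * star x) - (e * x * e - e * star x * e))
            + 2 ^ (k - 1) • (e * x * e - e * star x * e) := by
  intro k
  induction k with
  | zero => intro h; omega
  | succ k ih =>
    intro _ x
    rcases Nat.eq_zero_or_pos k with hk0 | hk0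
    · subst hk0
      show lieStar x e = _
      rw [lieStar]
      norm_num
    · rw [List.replicate_succ']
      have hfold : pStar x (List.replicate k e ++ [e])
          = lieStar (pStar x (List.replicate k e)) e := by
        simp [pStar, List.foldl_append, lieStar]
      rw [hfold, ih hk0 x]
      have hsu : star (x * e - e * star x) = e * star x - x * e := by
        simp [star_sub, star_mul, hes, mul_assoc]
      have hsv : star (e * x * e - e * star x * e) = e * star x * e - e * x * e := by
        simp [star_sub, star_mul, hes, mul_assoc]
      have f1 : lieStar (x * e - e * star x) e
          = (x * e - e * star x) + (e * x * e - e * star x * e) := by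
        rw [lieStar, hsu, sub_mul, mul_sub, mul_assoc x e e, he,
          ← mul_assoc e e (star x), he, ← mul_assoc e x e]
        abel
      have f2 : lieStar (e * x * e - e * star x * e) e
          = (e * x * e - e * star x * e) + (e * x * e - e * star x * e) := by
        rw [lieStar, hsv, sub_mul, mul_sub, mul_assoc (e*x) e e, he,
          mul_assoc (e * star x) e e, he,
          ← mul_assoc e (e * star x) e, ← mul_assoc e e (star x), he,
          ← mul_assoc e (e * x) e, ← mul_assoc e e x, he]
        abel
      rw [lieStar_add_left, lieStar_nsmul_left, lieStar_sub_left, f1, f2]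
      have hpow : (2:ℕ) ^ (k + 1 - 1) = 2 ^ (k - 1) + 2 ^ (k - 1) := by
        have h1 : k - 1 + 1 = k := Nat.succ_pred_eq_of_pos hk0
        calc (2:ℕ) ^ (k + 1 - 1) = 2 ^ (k - 1 + 1) := by rw [Nat.add_sub_cancel, h1]
          _ = 2 ^ (k - 1) + 2 ^ (k - 1) := by rw [pow_succ]; ring
      rw [hpow, add_nsmul, smul_add]
      abel

lemma qStar_replicate (e : R) (he : e * e = e) (hes : star e = e) :
    ∀ k : ℕ, 1 ≤ k → ∀ x : R,
      qStar x (List.replicate k e)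
        = ((x * e + e * star x) - (e * x * e + e * star x * e))
            + 2 ^ (k - 1) • (e * x * e + e * star x * e) := by
  intro k
  induction k with
  | zero => intro h; omega
  | succ k ih =>
    intro _ x
    rcases Nat.eq_zero_or_pos k with hk0 | hk0
    · subst hk0
      show jordanStar x e = _
      rw [jordanStar]
      norm_num
    · rw [List.replicate_succ']
      have hfold : qStar x (List.replicate k e ++ [e])
          = jordanStar (qStar x (List.replicate k e)) e := by
        simp [qStar, List.foldl_append, jordanStar]
      rw [hfold, ih hk0 x]
      have hsu : star (x * e + e * star x) = e * star x + x * e := by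
        simp [star_add, star_mul, hes, mul_assoc]
      have hsv : star (e * x * e + e * star x * e) = e * star x * e + e * x * e := by
        simp [star_add, star_mul, hes, mul_assoc]
      have f1 : jordanStar (x * e + e * star x) e
          = (x * e + e * star x) + (e * x * e + e * star x * e) := by
        rw [jordanStar, hsu, add_mul, mul_add, mul_assoc x e e, he,
          ← mul_assoc e e (star x), he, ← mul_assoc e x e]
        abel
      have f2 : jordanStar (e * x * e + e * star x * e) e
          = (e * x * e + e * star x * e) + (e * x * e + e * star x * e) := by
        rw [jordanStar, hsv, add_mul, mul_add, mul_assoc (e*x) e e, he,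
          mul_assoc (e * star x) e e, he,
          ← mul_assoc e (e * star x) e, ← mul_assoc e e (star x), he,
          ← mul_assoc e (e * x) e, ← mul_assoc e e x, he]
        abel
      rw [jordanStar_add_left, jordanStar_nsmul_left, jordanStar_sub_left, f1, f2]
      have hpow : (2:ℕ) ^ (k + 1 - 1) = 2 ^ (k - 1) + 2 ^ (k - 1) := by
        have h1 : k - 1 + 1 = k := Nat.succ_pred_eq_of_pos hk0
        calc (2:ℕ) ^ (k + 1 - 1) = 2 ^ (k - 1 + 1) := by rw [Nat.add_sub_cancel, h1]
          _ = 2 ^ (k - 1) + 2 ^ (k - 1) := by rw [pow_succ]; ring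
      rw [hpow, add_nsmul, smul_add]
      abel

lemma sandwich_facts (X Y c : R) (hXX : X * X = X) (hYY : Y * Y = Y)
    (hYX : Y * X = 0) (hc : X * c * Y = c) :
    c * Y = c ∧ X * c = c ∧ c * X = 0 ∧ Y * c = 0 := by
  refine ⟨?_, ?_, ?_, ?_⟩
  · conv_lhs => rw [← hc]
    rw [mul_assoc (X*c) Y Y, hYY]
    exact hc
  · conv_lhs => rw [← hc]
    rw [← mul_assoc X (X*c) Y, ← mul_assoc X X c, hXX]
    exact hc
  · conv_lhs => rw [← hc]
    rw [mul_assoc (X*c) Y X, hYX, mul_zero]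
  · conv_lhs => rw [← hc]
    rw [← mul_assoc Y (X*c) Y, ← mul_assoc Y X c, hYX, zero_mul, zero_mul]

end Aux

/-- φ(A_{12} + B_{21}) = φ(A_{12}) + φ(B_{21}). -/
theorem starLieJordanMap_add_off_off {A B : Type*} [NormedRing A] [StarRing A] [CStarRing A] [NormedAlgebra ℂ A] [CompleteSpace A] [StarModule ℂ A] [NormedRing B] [StarRing B] [CStarRing B] [NormedAlgebra ℂ B] [CompleteSpace B] [StarModule ℂ B]
    (n : ℕ) (hn : 2 ≤ n) (φ : A → B) (hbij : Function.Bijective φ) (hφ1 : φ 1 = 1)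
    (hp : ∀ (x : A) (l : List A), l.length = n - 1 → φ (pStar x l) = pStar (φ x) (l.map φ))
    (hq : ∀ (x : A) (l : List A), l.length = n - 1 → φ (qStar x l) = qStar (φ x) (l.map φ)) (P : A) (hPidem : P * P = P) (hPsa : star P = P) (hP0 : P ≠ 0) (hP1 : P ≠ 1)
    (a b : A) (ha : P * a * (1 - P) = a) (hb : (1 - P) * b * P = b) :
    φ (a + b) = φ a + φ b := by
  obtain ⟨T, hT⟩ := hbij.2 (φ a + φ b)
  set k := n - 1 with hkdef
  have hk : 1 ≤ k := by omega
  have cancelA : ∀ (m : ℕ), m ≠ 0 → ∀ x : A, m • x = 0 → x = 0 := by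
    intro m hm x hx
    have h1 : (m : ℂ) • x = 0 := by rw [Nat.cast_smul_eq_nsmul]; exact hx
    have h2 := congrArg (fun y => ((m:ℂ))⁻¹ • y) h1
    simpa [smul_smul, inv_mul_cancel₀ (show (m:ℂ) ≠ 0 from Nat.cast_ne_zero.mpr hm)] using h2
  have cancelB : ∀ (m : ℕ), m ≠ 0 → ∀ x : B, m • x = 0 → x = 0 := by
    intro m hm x hx
    have h1 : (m : ℂ) • x = 0 := by rw [Nat.cast_smul_eq_nsmul]; exact hx
    have h2 := congrArg (fun y => ((m:ℂ))⁻¹ • y) h1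
    simpa [smul_smul, inv_mul_cancel₀ (show (m:ℂ) ≠ 0 from Nat.cast_ne_zero.mpr hm)] using h2
  have cancelA2 : ∀ x y : A, x + x = y + y → x = y := by
    intro x y h
    have h2 : (x - y) + (x - y) = 0 := by
      calc (x - y) + (x - y) = (x + x) - (y + y) := by abel
        _ = 0 := by rw [h, sub_self]
    have h3 : (2:ℕ) • (x - y) = 0 := by rw [two_nsmul]; exact h2
    have h4 := cancelA 2 (by norm_num) _ h3
    exact sub_eq_zero.mp h4
  -- φ 0 = 0
  have hφ0 : φ 0 = 0 := by
    have hlen1 : (List.replicate k (1:A)).length = n - 1 := by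
      rw [List.length_replicate, hkdef]
    have h1 := hp 0 (List.replicate k 1) hlen1
    have h2 := hq 0 (List.replicate k 1) hlen1
    rw [pStar_zero, List.map_replicate, hφ1,
      pStar_replicate (1:B) (one_mul 1) (star_one B) k hk] at h1
    rw [qStar_zero, List.map_replicate, hφ1,
      qStar_replicate (1:B) (one_mul 1) (star_one B) k hk] at h2
    simp only [mul_one, one_mul, sub_self, zero_add] at h1 h2
    have h3 : (2^(k-1) + 2^(k-1)) • star (φ 0) = 0 := by
      have h4 := h1.symm.trans h2
      rw [smul_sub, smul_add] at h4
      rw [add_nsmul]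
      calc 2^(k-1) • star (φ 0) + 2^(k-1) • star (φ 0)
          = (2^(k-1) • φ 0 + 2^(k-1) • star (φ 0)) - (2^(k-1) • φ 0 - 2^(k-1) • star (φ 0)) := by
            abel
        _ = 0 := by rw [← h4, sub_self]
    have h5 : star (φ 0) = 0 := cancelB _ (by positivity) _ h3
    rw [← star_star (φ 0), h5, star_zero]
  -- projections
  set Q : A := 1 - P with hQdef
  have hQs : star Q = Q := by rw [hQdef, star_sub, star_one, hPsa]
  have hQQ : Q * Q = Q := by
    have h1 : Q * Q = 1 - P - P + P * P := by rw [hQdef]; noncomm_ring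
    rw [h1, hPidem, hQdef]; abel
  have hPQ : P * Q = 0 := by rw [hQdef, mul_sub, mul_one, hPidem, sub_self]
  have hQP : Q * P = 0 := by rw [hQdef, sub_mul, one_mul, hPidem, sub_self]
  have hPQ1 : P + Q = 1 := by rw [hQdef]; abel
  -- Peirce facts for a, b
  obtain ⟨haQ, hPa, haP, hQa⟩ := sandwich_facts P Q a hPidem hQQ hQP ha
  obtain ⟨hbP, hQb, hbQ, hPb⟩ := sandwich_facts Q P b hQQ hPidem hPQ hb
  have hastar : Q * star a * P = star a := by
    conv_rhs => rw [← ha]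
    simp [star_mul, hPsa, hQs, mul_assoc]
  have hbstar : P * star b * Q = star b := by
    conv_rhs => rw [← hb]
    simp [star_mul, hPsa, hQs, mul_assoc]
  obtain ⟨hsaP, hQsa, hsaQ, hPsa'⟩ := sandwich_facts Q P (star a) hQQ hPidem hPQ hastar
  obtain ⟨hsbQ, hPsb, hsbP, hQsb⟩ := sandwich_facts P Q (star b) hPidem hQQ hQP hbstar
  -- values of the words on a and b
  have hrepQlen : (List.replicate k Q).length = n - 1 := by rw [List.length_replicate, hkdef]
  have hrepPlen : (List.replicate k P).length = n - 1 := by rw [List.length_replicate, hkdef]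
  have hpaQ : pStar a (List.replicate k Q) = a - star a := by
    simp [pStar_replicate Q hQQ hQs k hk, haQ, hQsa, hQa, hsaQ]
  have hqaQ : qStar a (List.replicate k Q) = a + star a := by
    simp [qStar_replicate Q hQQ hQs k hk, haQ, hQsa, hQa, hsaQ]
  have hpbQ : pStar b (List.replicate k Q) = 0 := by
    simp [pStar_replicate Q hQQ hQs k hk, hbQ, hQsb, hQb]
  have hqbQ : qStar b (List.replicate k Q) = 0 := by
    simp [qStar_replicate Q hQQ hQs k hk, hbQ, hQsb, hQb]
  have hpbP : pStar b (List.replicate k P) = b - star b := by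
    simp [pStar_replicate P hPidem hPsa k hk, hbP, hPsb, hPb, hsbP]
  have hqbP : qStar b (List.replicate k P) = b + star b := by
    simp [qStar_replicate P hPidem hPsa k hk, hbP, hPsb, hPb, hsbP]
  have hpaP : pStar a (List.replicate k P) = 0 := by
    simp [pStar_replicate P hPidem hPsa k hk, haP, hPsa', hPa]
  have hqaP : qStar a (List.replicate k P) = 0 := by
    simp [qStar_replicate P hPidem hPsa k hk, haP, hPsa', hPa]
  -- injectivity steps
  have EP1 : pStar T (List.replicate k Q) = pStar a (List.replicate k Q) := by
    apply hbij.1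
    rw [hp T _ hrepQlen, List.map_replicate, hT, pStar_add_left,
      show List.replicate k (φ Q) = (List.replicate k Q).map φ from List.map_replicate.symm,
      ← hp a _ hrepQlen, ← hp b _ hrepQlen, hpbQ, hφ0, add_zero]
  have EQ1 : qStar T (List.replicate k Q) = qStar a (List.replicate k Q) := by
    apply hbij.1
    rw [hq T _ hrepQlen, List.map_replicate, hT, qStar_add_left,
      show List.replicate k (φ Q) = (List.replicate k Q).map φ from List.map_replicate.symm,
      ← hq a _ hrepQlen, ← hq b _ hrepQlen, hqbQ, hφ0, add_zero]
  have EP2 : pStar T (List.replicate k P) = pStar b (List.replicate k P) := by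
    apply hbij.1
    rw [hp T _ hrepPlen, List.map_replicate, hT, pStar_add_left,
      show List.replicate k (φ P) = (List.replicate k P).map φ from List.map_replicate.symm,
      ← hp a _ hrepPlen, ← hp b _ hrepPlen, hpaP, hφ0, zero_add]
  have EQ2 : qStar T (List.replicate k P) = qStar b (List.replicate k P) := by
    apply hbij.1
    rw [hq T _ hrepPlen, List.map_replicate, hT, qStar_add_left,
      show List.replicate k (φ P) = (List.replicate k P).map φ from List.map_replicate.symm,
      ← hq a _ hrepPlen, ← hq b _ hrepPlen, hqaP, hφ0, zero_add]
  have E1 : ((T*Q - Q*star T) - (Q*T*Q - Q*star T*Q)) + 2^(k-1) • (Q*T*Q - Q*star T*Q)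
      = a - star a := by
    rw [← pStar_replicate Q hQQ hQs k hk T, EP1, hpaQ]
  have E2 : ((T*Q + Q*star T) - (Q*T*Q + Q*star T*Q)) + 2^(k-1) • (Q*T*Q + Q*star T*Q)
      = a + star a := by
    rw [← qStar_replicate Q hQQ hQs k hk T, EQ1, hqaQ]
  have E3 : ((T*P - P*star T) - (P*T*P - P*star T*P)) + 2^(k-1) • (P*T*P - P*star T*P)
      = b - star b := by
    rw [← pStar_replicate P hPidem hPsa k hk T, EP2, hpbP]
  have E4 : ((T*P + P*star T) - (P*T*P + P*star T*P)) + 2^(k-1) • (P*T*P + P*star T*P)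
      = b + star b := by
    rw [← qStar_replicate P hPidem hPsa k hk T, EQ2, hqbP]
  have F1 : T*Q - Q*T*Q + 2^(k-1) • (Q*T*Q) = a := by
    apply cancelA2
    calc (T*Q - Q*T*Q + 2^(k-1) • (Q*T*Q)) + (T*Q - Q*T*Q + 2^(k-1) • (Q*T*Q))
        = (((T*Q - Q*star T) - (Q*T*Q - Q*star T*Q)) + 2^(k-1) • (Q*T*Q - Q*star T*Q))
          + (((T*Q + Q*star T) - (Q*T*Q + Q*star T*Q)) + 2^(k-1) • (Q*T*Q + Q*star T*Q)) := by
          rw [smul_sub, smul_add]; abel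
      _ = (a - star a) + (a + star a) := by rw [E1, E2]
      _ = a + a := by abel
  have F2 : T*P - P*T*P + 2^(k-1) • (P*T*P) = b := by
    apply cancelA2
    calc (T*P - P*T*P + 2^(k-1) • (P*T*P)) + (T*P - P*T*P + 2^(k-1) • (P*T*P))
        = (((T*P - P*star T) - (P*T*P - P*star T*P)) + 2^(k-1) • (P*T*P - P*star T*P))
          + (((T*P + P*star T) - (P*T*P + P*star T*P)) + 2^(k-1) • (P*T*P + P*star T*P)) := by
          rw [smul_sub, smul_add]; abel
      _ = (b - star b) + (b + star b) := by rw [E3, E4]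
      _ = b + b := by abel
  have hQQl : ∀ z : A, Q * (Q * z) = Q * z := fun z => by rw [← mul_assoc, hQQ]
  have hPQl : ∀ z : A, P * (Q * z) = 0 := fun z => by rw [← mul_assoc, hPQ, zero_mul]
  have hQPl : ∀ z : A, Q * (P * z) = 0 := fun z => by rw [← mul_assoc, hQP, zero_mul]
  have hPPl : ∀ z : A, P * (P * z) = P * z := fun z => by rw [← mul_assoc, hPidem]
  have G1 : Q * (T * Q) = 0 := by
    have h := congrArg (fun z => Q * z) F1
    simp only [mul_sub, mul_add, mul_nsmul_right, mul_assoc, hQQl, hQa, sub_self, zero_add] at h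
    exact cancelA _ (by positivity) _ h
  have G2 : P * (T * Q) = a := by
    have h := congrArg (fun z => P * z) F1
    simp only [mul_sub, mul_add, mul_nsmul_right, mul_assoc, hPQl, smul_zero, sub_zero,
      add_zero, hPa] at h
    exact h
  have G3 : P * (T * P) = 0 := by
    have h := congrArg (fun z => P * z) F2
    simp only [mul_sub, mul_add, mul_nsmul_right, mul_assoc, hPPl, hPb, sub_self, zero_add] at h
    exact cancelA _ (by positivity) _ h
  have G4 : Q * (T * P) = b := by
    have h := congrArg (fun z => Q * z) F2
    simp only [mul_sub, mul_add, mul_nsmul_right, mul_assoc, hQPl, smul_zero, sub_zero,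
      add_zero, hQb] at h
    exact h
  have hTab : T = a + b := by
    have h1 : T = P*(T*P) + P*(T*Q) + (Q*(T*P) + Q*(T*Q)) := by
      calc T = (P + Q) * (T * (P + Q)) := by rw [hPQ1, mul_one, one_mul]
        _ = P*(T*P) + P*(T*Q) + (Q*(T*P) + Q*(T*Q)) := by noncomm_ring
    rw [G1, G2, G3, G4] at h1
    simpa using h1
  rw [← hTab]
  exact hT
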